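/- Assume the restricted isometry constant of X satisfies δ_{k0} < 1. Let J ⊆ S be any subset of the true support with card(J) = k < k0, let u = S ∖ J, let P_J be the orthogonal projection of ℝⁿ onto the span of the columns of X indexed by J, and let r = y − P_J y. Then √(1−δ_{k0}) ‖β_u‖₂ − ‖w‖₂ ≤ ‖r‖₂ ≤ √(1+δ_{k0}) ‖β_u‖₂ + ‖w‖₂, where β_u ∈ ℝ^{card(u)} denotes the entries of β indexed by u. -/

import Mathlib

open MeasureTheory ProbabilityTheory Filter
open scoped ENNReal NNReal

noncomputable section

namespace RRTPaper

variable {n p : ℕ}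

/-- The support of a coefficient vector as a `Finset`. -/
def suppF {p : ℕ} (β : Fin p → ℝ) : Finset (Fin p) :=
  Finset.univ.filter fun j => β j ≠ 0

/-- `β_min`: the smallest absolute value of `β` on its support. -/
def betaMin {p : ℕ} (β : Fin p → ℝ) : ℝ :=
  sInf ((fun j => |β j|) '' {j | β j ≠ 0})

/-- `β_max`: the largest absolute value of `β` on its support. -/
def betaMax {p : ℕ} (β : Fin p → ℝ) : ℝ :=
  sSup ((fun j => |β j|) '' {j | β j ≠ 0})

/-- The ℓ2 norm of a coefficient vector. -/
def l2norm {p : ℕ} (b : Fin p → ℝ) : ℝ := Real.sqrt (∑ j, (b j) ^ 2)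

/-- The design matrix (given by its columns `X j ∈ ℝⁿ`) applied to a coefficient
vector: `Xb = ∑ j, b j • X j`. -/
def applyX (X : Fin p → EuclideanSpace ℝ (Fin n)) (b : Fin p → ℝ) :
    EuclideanSpace ℝ (Fin n) := ∑ j, b j • X j

/-- The set of admissible restricted isometry constants of order `s`:
`δ ≥ 0` such that `(1−δ)‖b‖₂² ≤ ‖Xb‖₂² ≤ (1+δ)‖b‖₂²` for every `b` with at most `s`
nonzero entries. -/
def ripSet (X : Fin p → EuclideanSpace ℝ (Fin n)) (s : ℕ) : Set ℝ :=
  {δ : ℝ | 0 ≤ δ ∧ ∀ b : Fin p → ℝ, (suppF b).card ≤ s →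
    (1 - δ) * (l2norm b) ^ 2 ≤ ‖applyX X b‖ ^ 2 ∧
      ‖applyX X b‖ ^ 2 ≤ (1 + δ) * (l2norm b) ^ 2}

/-- The restricted isometry constant `δ_s` of order `s` (the smallest admissible `δ`). -/
def RIC (X : Fin p → EuclideanSpace ℝ (Fin n)) (s : ℕ) : ℝ := sInf (ripSet X s)

/-- The OMP support estimate `S_k` after `k` iterations, given the sequence `t` of
selected indices (`t k` is the index selected at iteration `k+1`). -/
def ompSupport {p : ℕ} (t : ℕ → Fin p) (k : ℕ) : Finset (Fin p) :=
  (Finset.range k).image t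

/-- The OMP residual `r^k = y − P_k y`, where `P_k` is the orthogonal projection onto
the span of the columns indexed by `S_k`. -/
def ompResidual (X : Fin p → EuclideanSpace ℝ (Fin n)) (y : EuclideanSpace ℝ (Fin n))
    (t : ℕ → Fin p) (k : ℕ) : EuclideanSpace ℝ (Fin n) :=
  y - ↑(Submodule.orthogonalProjectionOnto (Submodule.span ℝ (X '' ↑(ompSupport t k))) y)

/-- `t` is a valid OMP selection sequence for design `X` and observation `y`:
at every iteration the selected index maximizes the absolute correlation with the
current residual. -/
def IsOMP (X : Fin p → EuclideanSpace ℝ (Fin n)) (y : EuclideanSpace ℝ (Fin n))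
    (t : ℕ → Fin p) : Prop :=
  ∀ k : ℕ, ∀ j : Fin p,
    |(inner ℝ (X j) (ompResidual X y t k) : ℝ)| ≤
      |(inner ℝ (X (t k)) (ompResidual X y t k) : ℝ)|

/-- The residual ratio statistic `RR(k) = ‖r^k‖₂ / ‖r^{k−1}‖₂`. -/
def resRatio (X : Fin p → EuclideanSpace ℝ (Fin n)) (y : EuclideanSpace ℝ (Fin n))
    (t : ℕ → Fin p) (k : ℕ) : ℝ :=
  ‖ompResidual X y t k‖ / ‖ompResidual X y t (k - 1)‖

/-- `k_min`: the first `1 ≤ k ≤ k_max` with `S ⊆ S_k` (`⊤ = ∞` if there is none). -/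
def kmin {p : ℕ} (t : ℕ → Fin p) (β : Fin p → ℝ) (kmax : ℕ) : ℕ∞ :=
  sInf ((fun k : ℕ => (k : ℕ∞)) ''
    {k | 1 ≤ k ∧ k ≤ kmax ∧ suppF β ⊆ ompSupport t k})

/-- The Beta function `B(a,b)`. -/
def betaFun (a b : ℝ) : ℝ := Real.Gamma a * Real.Gamma b / Real.Gamma (a + b)

/-- The CDF of the Beta(a,b) distribution. -/
def betaCDF (a b x : ℝ) : ℝ :=
  (1 / betaFun a b) * ∫ u in (0:ℝ)..x, u ^ (a - 1) * (1 - u) ^ (b - 1)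

/-- The inverse of the Beta(a,b) CDF on (0,1) (as a generalized inverse). -/
def betaICDF (a b z : ℝ) : ℝ := sInf {x : ℝ | 0 ≤ x ∧ z ≤ betaCDF a b x}

/-- The residual ratio threshold `Γ_RRT^α(k)`. -/
def GammaRRT (n p kmax : ℕ) (α : ℝ) (k : ℕ) : ℝ :=
  Real.sqrt (betaICDF (((n : ℝ) - k) / 2) (1 / 2)
    (α / ((kmax : ℝ) * ((p : ℝ) - k + 1))))

/-- `k_RRT = max{1 ≤ k ≤ k_max : RR(k) < Γ_RRT^α(k)}` (`0`, giving `S_RRT = ∅`,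
if the set is empty). -/
def kRRT (X : Fin p → EuclideanSpace ℝ (Fin n)) (y : EuclideanSpace ℝ (Fin n))
    (t : ℕ → Fin p) (kmax : ℕ) (α : ℝ) : ℕ :=
  WithBot.unbotD 0 ((Finset.Icc 1 kmax).filter fun k =>
    resRatio X y t k < GammaRRT n p kmax α k).max

/-- `k_RRM`: the smallest minimizer of `RR(k)` over `1 ≤ k ≤ k_max`. -/
def kRRM (X : Fin p → EuclideanSpace ℝ (Fin n)) (y : EuclideanSpace ℝ (Fin n))
    (t : ℕ → Fin p) (kmax : ℕ) : ℕ :=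
  sInf {k | k ∈ Finset.Icc 1 kmax ∧
    ∀ j ∈ Finset.Icc 1 kmax, resRatio X y t k ≤ resRatio X y t j}

/-- `min_{1 ≤ k ≤ k_max} RR(k)`. -/
def minRR (X : Fin p → EuclideanSpace ℝ (Fin n)) (y : EuclideanSpace ℝ (Fin n))
    (t : ℕ → Fin p) (kmax : ℕ) : ℝ :=
  sInf (resRatio X y t '' Set.Icc 1 kmax)

/-- The adaptive RRT parameter `α* = min(PFD_finite, (min_k RR(k))^q)`. -/
def alphaStar (X : Fin p → EuclideanSpace ℝ (Fin n)) (y : EuclideanSpace ℝ (Fin n))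
    (t : ℕ → Fin p) (kmax : ℕ) (PFD q : ℝ) : ℝ :=
  min PFD (minRR X y t kmax ^ q)

/-- `k_RRTA`: RRT with the adapted parameter `α*`. -/
def kRRTA (X : Fin p → EuclideanSpace ℝ (Fin n)) (y : EuclideanSpace ℝ (Fin n))
    (t : ℕ → Fin p) (kmax : ℕ) (PFD q : ℝ) : ℕ :=
  kRRT X y t kmax (alphaStar X y t kmax PFD q)

/-- `ε_omp` from Lemma 1 of the paper. -/
def epsOMP (X : Fin p → EuclideanSpace ℝ (Fin n)) (β : Fin p → ℝ) (k0 : ℕ) : ℝ :=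
  betaMin β * Real.sqrt (1 - RIC X (k0 + 1)) *
    (1 - Real.sqrt ((k0 : ℝ) + 1) * RIC X (k0 + 1)) /
    (1 + Real.sqrt (1 - RIC X (k0 + 1) ^ 2) - Real.sqrt ((k0 : ℝ) + 1) * RIC X (k0 + 1))

/-- `ε_σ = σ √(n + 2 √(n log n))`. -/
def epsSigma (n : ℕ) (σ : ℝ) : ℝ :=
  σ * Real.sqrt ((n : ℝ) + 2 * Real.sqrt ((n : ℝ) * Real.log (n : ℝ)))

/-- The distribution of the noise vector `w ~ N(0, σ² Iₙ)` on `ℝⁿ`. -/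
def noise (n : ℕ) (σ : ℝ) : Measure (EuclideanSpace ℝ (Fin n)) :=
  (Measure.pi fun _ : Fin n => gaussianReal 0 ⟨σ ^ 2, sq_nonneg σ⟩).map
    (MeasurableEquiv.toLp 2 (Fin n → ℝ))

/-!
Let `V` be the span of the columns indexed by `J` and `P⊥` the orthogonal projection onto `Vᗮ`,
so that `r = P⊥(Xβ) + P⊥w` and `‖P⊥w‖ ≤ ‖w‖`. Since `P_J(Xβ) = Xc` for some `c` supported on
`J ⊆ S`, we have `P⊥(Xβ) = X(β - c)` with `β - c` supported on `S` and equal to `β` on `u`, and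
the lower RIP bound gives `‖P⊥(Xβ)‖ ≥ √(1-δ) ‖β_u‖`. Since `β - β_u` is supported on `J`,
`P⊥(Xβ) = P⊥(Xβ_u)`, and the upper RIP bound gives `‖P⊥(Xβ)‖ ≤ ‖Xβ_u‖ ≤ √(1+δ) ‖β_u‖`.
-/

lemma applyX_sub (X : Fin p → EuclideanSpace ℝ (Fin n)) (b c : Fin p → ℝ) :
    applyX X (b - c) = applyX X b - applyX X c := by
  simp only [applyX, Pi.sub_apply, sub_smul, Finset.sum_sub_distrib]

lemma mem_span_image_iff_exists_applyX (X : Fin p → EuclideanSpace ℝ (Fin n))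
    (J : Finset (Fin p)) (z : EuclideanSpace ℝ (Fin n)) :
    z ∈ Submodule.span ℝ (X '' ↑J) ↔ ∃ c : Fin p → ℝ, (∀ j ∉ J, c j = 0) ∧ applyX X c = z := by
  rw [Finsupp.mem_span_image_iff_linearCombination]
  constructor
  · rintro ⟨l, hl, rfl⟩
    refine ⟨l, fun j hj => Finsupp.notMem_support_iff.1 fun h => hj (hl h), ?_⟩
    simp [applyX, Finsupp.linearCombination_apply, Finsupp.sum_fintype]
  · rintro ⟨c, hc, rfl⟩
    refine ⟨Finsupp.equivFunOnFinite.symm c, fun j hj => ?_, ?_⟩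
    · by_contra hjJ
      exact (Finsupp.mem_support_iff.1 hj) (hc j hjJ)
    · simp [applyX, Finsupp.linearCombination_apply, Finsupp.sum_fintype]

lemma l2norm_nonneg (b : Fin p → ℝ) : 0 ≤ l2norm b := Real.sqrt_nonneg _

lemma l2norm_sq (b : Fin p → ℝ) : l2norm b ^ 2 = ∑ j, b j ^ 2 :=
  Real.sq_sqrt (Finset.sum_nonneg fun _ _ => sq_nonneg _)

lemma norm_applyX_sq_le (X : Fin p → EuclideanSpace ℝ (Fin n)) (b : Fin p → ℝ) :
    ‖applyX X b‖ ^ 2 ≤ (∑ j, ‖X j‖ ^ 2) * l2norm b ^ 2 := by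
  have hsum : ‖applyX X b‖ ≤ ∑ j, |b j| * ‖X j‖ := by
    simpa only [applyX, norm_smul, Real.norm_eq_abs] using
      norm_sum_le Finset.univ fun j => b j • X j
  calc ‖applyX X b‖ ^ 2 ≤ (∑ j, |b j| * ‖X j‖) ^ 2 := by gcongr
    _ ≤ (∑ j, |b j| ^ 2) * ∑ j, ‖X j‖ ^ 2 := Finset.sum_mul_sq_le_sq_mul_sq _ _ _
    _ = (∑ j, ‖X j‖ ^ 2) * l2norm b ^ 2 := by simp only [sq_abs, l2norm_sq, mul_comm]

lemma ripSet_nonempty (X : Fin p → EuclideanSpace ℝ (Fin n)) (s : ℕ) :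
    (ripSet X s).Nonempty := by
  have hcols : 0 ≤ ∑ j, ‖X j‖ ^ 2 := by positivity
  refine ⟨1 + ∑ j, ‖X j‖ ^ 2, by positivity, fun b _ => ⟨?_, ?_⟩⟩
  · nlinarith [sq_nonneg ‖applyX X b‖, sq_nonneg (l2norm b)]
  · nlinarith [norm_applyX_sq_le X b, sq_nonneg (l2norm b)]

lemma isClosed_ripSet (X : Fin p → EuclideanSpace ℝ (Fin n)) (s : ℕ) :
    IsClosed (ripSet X s) := by
  simp only [ripSet, Set.ofPred_and, Set.ofPred_forall]
  exact (isClosed_le continuous_const continuous_id).inter <|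
    isClosed_iInter fun b => isClosed_iInter fun _ =>
      (isClosed_le (by fun_prop) continuous_const).inter
        (isClosed_le continuous_const (by fun_prop))

lemma RIC_mem_ripSet (X : Fin p → EuclideanSpace ℝ (Fin n)) (s : ℕ) : RIC X s ∈ ripSet X s :=
  (isClosed_ripSet X s).csInf_mem (ripSet_nonempty X s) ⟨0, fun _ hδ => hδ.1⟩

lemma sqrt_one_sub_RIC_mul_l2norm_le (X : Fin p → EuclideanSpace ℝ (Fin n)) {s : ℕ}
    {b : Fin p → ℝ} (hb : (suppF b).card ≤ s) :
    Real.sqrt (1 - RIC X s) * l2norm b ≤ ‖applyX X b‖ := by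
  calc Real.sqrt (1 - RIC X s) * l2norm b = Real.sqrt ((1 - RIC X s) * l2norm b ^ 2) := by
        rw [Real.sqrt_mul' _ (sq_nonneg _), Real.sqrt_sq (l2norm_nonneg b)]
    _ ≤ Real.sqrt (‖applyX X b‖ ^ 2) := Real.sqrt_le_sqrt ((RIC_mem_ripSet X s).2 b hb).1
    _ = ‖applyX X b‖ := Real.sqrt_sq (norm_nonneg _)

lemma norm_applyX_le_sqrt_one_add_RIC_mul_l2norm (X : Fin p → EuclideanSpace ℝ (Fin n))
    {s : ℕ} {b : Fin p → ℝ} (hb : (suppF b).card ≤ s) :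
    ‖applyX X b‖ ≤ Real.sqrt (1 + RIC X s) * l2norm b := by
  calc ‖applyX X b‖ = Real.sqrt (‖applyX X b‖ ^ 2) := (Real.sqrt_sq (norm_nonneg _)).symm
    _ ≤ Real.sqrt ((1 + RIC X s) * l2norm b ^ 2) :=
        Real.sqrt_le_sqrt ((RIC_mem_ripSet X s).2 b hb).2
    _ = Real.sqrt (1 + RIC X s) * l2norm b := by
        rw [Real.sqrt_mul' _ (sq_nonneg _), Real.sqrt_sq (l2norm_nonneg b)]

lemma mem_suppF {b : Fin p → ℝ} {j : Fin p} : j ∈ suppF b ↔ b j ≠ 0 := by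
  simp [suppF]

lemma sqrt_sum_sq_le_l2norm {s : Finset (Fin p)} {b β : Fin p → ℝ} (h : ∀ j ∈ s, b j = β j) :
    Real.sqrt (∑ j ∈ s, β j ^ 2) ≤ l2norm b := by
  refine Real.sqrt_le_sqrt ?_
  calc ∑ j ∈ s, β j ^ 2 = ∑ j ∈ s, b j ^ 2 := Finset.sum_congr rfl fun j hj => by rw [h j hj]
    _ ≤ ∑ j, b j ^ 2 :=
        Finset.sum_le_sum_of_subset_of_nonneg (Finset.subset_univ s) fun _ _ _ => sq_nonneg _

lemma l2norm_indicator (s : Finset (Fin p)) (b : Fin p → ℝ) :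
    l2norm ((s : Set (Fin p)).indicator b) = Real.sqrt (∑ j ∈ s, b j ^ 2) := by
  simp [l2norm, Set.indicator_apply, apply_ite (· ^ 2)]

lemma suppF_indicator_subset (s : Finset (Fin p)) (b : Fin p → ℝ) :
    suppF ((s : Set (Fin p)).indicator b) ⊆ s := fun j hj => by
  by_contra hjs
  exact mem_suppF.1 hj (Set.indicator_of_notMem hjs b)

section Residual

variable (X : Fin p → EuclideanSpace ℝ (Fin n)) (J : Finset (Fin p))

lemma starProjection_orthogonal_applyX_sub {b c : Fin p → ℝ} (hc : ∀ j ∉ J, c j = 0) :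
    (Submodule.span ℝ (X '' ↑J))ᗮ.starProjection (applyX X (b - c)) =
      (Submodule.span ℝ (X '' ↑J))ᗮ.starProjection (applyX X b) := by
  rw [applyX_sub, map_sub, Submodule.starProjection_orthogonal_apply_eq_zero
    ((mem_span_image_iff_exists_applyX X J _).2 ⟨c, hc, rfl⟩), sub_zero]

lemma exists_starProjection_orthogonal_eq_applyX_sub (b : Fin p → ℝ) :
    ∃ c : Fin p → ℝ, (∀ j ∉ J, c j = 0) ∧
      (Submodule.span ℝ (X '' ↑J))ᗮ.starProjection (applyX X b) = applyX X (b - c) := by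
  obtain ⟨c, hc, hXc⟩ := (mem_span_image_iff_exists_applyX X J _).1
    ((Submodule.span ℝ (X '' ↑J)).starProjection_apply_mem (applyX X b))
  exact ⟨c, hc, by rw [Submodule.starProjection_orthogonal_val, applyX_sub, hXc]⟩

variable {β : Fin p → ℝ} {s : ℕ}

lemma sqrt_one_sub_RIC_mul_le_norm_residual (hJ : J ⊆ suppF β) (hs : (suppF β).card ≤ s) :
    Real.sqrt (1 - RIC X s) * Real.sqrt (∑ j ∈ suppF β \ J, β j ^ 2) ≤
      ‖(Submodule.span ℝ (X '' ↑J))ᗮ.starProjection (applyX X β)‖ := by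
  obtain ⟨c, hc, hPβ⟩ := exists_starProjection_orthogonal_eq_applyX_sub X J β
  have hsupp : suppF (β - c) ⊆ suppF β := fun j hj => by
    by_contra hjβ
    have hβj : β j = 0 := by simpa [mem_suppF] using hjβ
    exact mem_suppF.1 hj (by simp [hβj, hc j fun hjJ => hjβ (hJ hjJ)])
  have hcoeff : Real.sqrt (∑ j ∈ suppF β \ J, β j ^ 2) ≤ l2norm (β - c) :=
    sqrt_sum_sq_le_l2norm fun j hj => by simp [hc j (Finset.mem_sdiff.1 hj).2]
  calc Real.sqrt (1 - RIC X s) * Real.sqrt (∑ j ∈ suppF β \ J, β j ^ 2)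
      ≤ Real.sqrt (1 - RIC X s) * l2norm (β - c) := by gcongr
    _ ≤ ‖applyX X (β - c)‖ :=
        sqrt_one_sub_RIC_mul_l2norm_le X ((Finset.card_le_card hsupp).trans hs)
    _ = _ := by rw [hPβ]

lemma norm_residual_le_sqrt_one_add_RIC_mul (hs : (suppF β).card ≤ s) :
    ‖(Submodule.span ℝ (X '' ↑J))ᗮ.starProjection (applyX X β)‖ ≤
      Real.sqrt (1 + RIC X s) * Real.sqrt (∑ j ∈ suppF β \ J, β j ^ 2) := by
  set βu := ((suppF β \ J : Finset (Fin p)) : Set (Fin p)).indicator β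
  have hβJ : ∀ j ∉ J, (β - βu) j = 0 := fun j hj => by
    by_cases hjβ : j ∈ suppF β
    · simp [βu, hj, hjβ]
    · have hβj : β j = 0 := by simpa [mem_suppF] using hjβ
      simp [βu, hjβ, hβj]
  have hcard : (suppF βu).card ≤ s :=
    (Finset.card_le_card ((suppF_indicator_subset _ β).trans Finset.sdiff_subset)).trans hs
  calc ‖(Submodule.span ℝ (X '' ↑J))ᗮ.starProjection (applyX X β)‖
      = ‖(Submodule.span ℝ (X '' ↑J))ᗮ.starProjection (applyX X βu)‖ := by
        rw [← starProjection_orthogonal_applyX_sub X J hβJ, sub_sub_cancel]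
    _ ≤ ‖applyX X βu‖ := Submodule.norm_starProjection_apply_le _ _
    _ ≤ Real.sqrt (1 + RIC X s) * l2norm βu := norm_applyX_le_sqrt_one_add_RIC_mul_l2norm X hcard
    _ = _ := by rw [l2norm_indicator]

end Residual

theorem statement_16_general {n p k0 : ℕ}
    (X : Fin p → EuclideanSpace ℝ (Fin n))
    (β : Fin p → ℝ) (hβ : (suppF β).card = k0)
    (w : EuclideanSpace ℝ (Fin n))
    (J : Finset (Fin p)) (hJ : J ⊆ suppF β) :
    Real.sqrt (1 - RIC X k0) * Real.sqrt (∑ j ∈ suppF β \ J, (β j) ^ 2) - ‖w‖ ≤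
      ‖applyX X β + w -
        ↑(Submodule.orthogonalProjectionOnto (Submodule.span ℝ (X '' ↑J)) (applyX X β + w))‖ ∧
    ‖applyX X β + w -
        ↑(Submodule.orthogonalProjectionOnto (Submodule.span ℝ (X '' ↑J)) (applyX X β + w))‖ ≤
      Real.sqrt (1 + RIC X k0) * Real.sqrt (∑ j ∈ suppF β \ J, (β j) ^ 2) + ‖w‖ := by
  set V := Submodule.span ℝ (X '' ↑J)
  rw [← V.starProjection_apply, ← V.starProjection_orthogonal_val, map_add]
  have hlower := sqrt_one_sub_RIC_mul_le_norm_residual X J hJ hβ.le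
  have hupper := norm_residual_le_sqrt_one_add_RIC_mul X J hβ.le
  have hw := Vᗮ.norm_starProjection_apply_le w
  constructor
  · linarith [norm_le_add_norm_add (Vᗮ.starProjection (applyX X β)) (Vᗮ.starProjection w)]
  · linarith [norm_add_le (Vᗮ.starProjection (applyX X β)) (Vᗮ.starProjection w)]

/-- If `δ_{k0} < 1`, `J ⊆ S` with `card(J) = k < k0`, `u = S ∖ J`, and
`r = y − P_J y` where `P_J` is the orthogonal projection onto the span of the columns of
`X` indexed by `J`, then `√(1−δ_{k0}) ‖β_u‖₂ − ‖w‖₂ ≤ ‖r‖₂ ≤ √(1+δ_{k0}) ‖β_u‖₂ + ‖w‖₂`. -/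
theorem statement_16 {n p k0 : ℕ} (hnp : n < p) (hk0 : 1 ≤ k0)
    (X : Fin p → EuclideanSpace ℝ (Fin n)) (hX : ∀ j, ‖X j‖ = 1)
    (β : Fin p → ℝ) (hβ : (suppF β).card = k0)
    (w : EuclideanSpace ℝ (Fin n))
    (hRIC : RIC X k0 < 1)
    (J : Finset (Fin p)) (hJ : J ⊆ suppF β) (k : ℕ) (hJk : J.card = k) (hkk0 : k < k0) :
    Real.sqrt (1 - RIC X k0) * Real.sqrt (∑ j ∈ suppF β \ J, (β j) ^ 2) - ‖w‖ ≤
      ‖applyX X β + w -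
        ↑(Submodule.orthogonalProjectionOnto (Submodule.span ℝ (X '' ↑J)) (applyX X β + w))‖ ∧
    ‖applyX X β + w -
        ↑(Submodule.orthogonalProjectionOnto (Submodule.span ℝ (X '' ↑J)) (applyX X β + w))‖ ≤
      Real.sqrt (1 + RIC X k0) * Real.sqrt (∑ j ∈ suppF β \ J, (β j) ^ 2) + ‖w‖ :=
  statement_16_general X β hβ w J hJ

end RRTPaper
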